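/- arXiv:2501.15685 — 3 statements merged into one kernel-verified Lean document; each statement's English description precedes it below -/
import Mathlib

section
/- Let G be a real symmetric positive definite K×K matrix, V a real symmetric positive semidefinite K×K matrix, S > 0, and suppose V r = β² G r for some r ∈ ℝ^K and β² ≥ 0. Then the quadratic function W ↦ Wᵀ(G + S⁻¹V)W − 2 Wᵀ G r + rᵀ G r on ℝ^K attains its minimum at W* = (S/(S + β²))·r, and the minimum value equals (β²/(S + β²))·(rᵀ G r). Consequently, if rᵀ G r > 0, then 1 − (minimum value)/(rᵀ G r) = 1/(1 + β²/S): the resolvable expressive capacity of the eigentask with eigenvalue β² at sample size S equals 1/(1+β²/S). -/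
open Matrix

/-- The quadratic mean-squared-error functional
`W ↦ Wᵀ(G + S⁻¹V)W − 2WᵀGr + rᵀGr` for an eigentask `V r = β² G r` is minimized at
`W* = (S/(S+β²))·r`, with minimum value `(β²/(S+β²))·(rᵀGr)`; hence, when
`rᵀGr > 0`, the REC of the eigentask is `1 − min/(rᵀGr) = 1/(1+β²/S)`. -/
theorem stmt_6 {K : ℕ} (G V : Matrix (Fin K) (Fin K) ℝ)
    (hG : G.PosDef) (hV : V.PosSemidef) (S : ℝ) (hS : 0 < S)
    (r : Fin K → ℝ) (β2 : ℝ) (hβ2 : 0 ≤ β2)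
    (heig : V.mulVec r = β2 • G.mulVec r) :
    (∀ W : Fin K → ℝ,
      ((S / (S + β2)) • r) ⬝ᵥ ((G + S⁻¹ • V).mulVec ((S / (S + β2)) • r))
          - 2 * (((S / (S + β2)) • r) ⬝ᵥ G.mulVec r) + r ⬝ᵥ G.mulVec r
        ≤ W ⬝ᵥ ((G + S⁻¹ • V).mulVec W) - 2 * (W ⬝ᵥ G.mulVec r) + r ⬝ᵥ G.mulVec r) ∧
    (((S / (S + β2)) • r) ⬝ᵥ ((G + S⁻¹ • V).mulVec ((S / (S + β2)) • r))
        - 2 * (((S / (S + β2)) • r) ⬝ᵥ G.mulVec r) + r ⬝ᵥ G.mulVec r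
      = (β2 / (S + β2)) * (r ⬝ᵥ G.mulVec r)) ∧
    (0 < r ⬝ᵥ G.mulVec r →
      1 - ((β2 / (S + β2)) * (r ⬝ᵥ G.mulVec r)) / (r ⬝ᵥ G.mulVec r)
        = 1 / (1 + β2 / S)) := by
  have hSβ : 0 < S + β2 := by linarith
  have hAT : (G + S⁻¹ • V)ᵀ = G + S⁻¹ • V := by
    have hGt : Gᵀ = G := by
      rw [← conjTranspose_eq_transpose_of_trivial]; exact hG.isHermitian
    have hVt : Vᵀ = V := by
      rw [← conjTranspose_eq_transpose_of_trivial]; exact hV.1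
    rw [transpose_add, transpose_smul, hGt, hVt]
  have hAnn : ∀ x : Fin K → ℝ, 0 ≤ x ⬝ᵥ (G + S⁻¹ • V).mulVec x := by
    intro x
    have h1 := hG.posSemidef.dotProduct_mulVec_nonneg x
    have h2 := hV.dotProduct_mulVec_nonneg x
    simp only [star_trivial] at h1 h2
    rw [add_mulVec, dotProduct_add, smul_mulVec, dotProduct_smul, smul_eq_mul]
    have : 0 ≤ S⁻¹ * (x ⬝ᵥ V.mulVec x) := mul_nonneg (by positivity) h2
    linarith
  set c : ℝ := S / (S + β2) with hc
  set b : Fin K → ℝ := G.mulVec r with hb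
  set A : Matrix (Fin K) (Fin K) ℝ := G + S⁻¹ • V with hA
  have hAr : A.mulVec r = (1 + S⁻¹ * β2) • b := by
    simp only [hA, add_mulVec, smul_mulVec, heig, hb, smul_smul]
    rw [add_smul, one_smul]
  have hone : c * (1 + S⁻¹ * β2) = 1 := by
    field_simp [hc]
    rw [hc, div_mul_cancel₀ _ hSβ.ne']
  have hAu : A.mulVec (c • r) = b := by
    rw [mulVec_smul, hAr, smul_smul, hone, one_smul]
  have hsym : ∀ x y : Fin K → ℝ, x ⬝ᵥ A.mulVec y = y ⬝ᵥ A.mulVec x := by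
    intro x y
    rw [dotProduct_mulVec, ← mulVec_transpose, hAT, dotProduct_comm]
  have hub : (c • r) ⬝ᵥ b = c * (r ⬝ᵥ b) := smul_dotProduct c r b
  refine ⟨?_, ?_, ?_⟩
  · intro W
    have hnn : 0 ≤ (W - c • r) ⬝ᵥ A.mulVec (W - c • r) := hAnn (W - c • r)
    have hexp : (W - c • r) ⬝ᵥ A.mulVec (W - c • r)
        = W ⬝ᵥ A.mulVec W - 2 * (W ⬝ᵥ b) + (c • r) ⬝ᵥ b := by
      have h1 : W ⬝ᵥ A.mulVec (c • r) = W ⬝ᵥ b := by rw [hAu]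
      have h2 : (c • r) ⬝ᵥ A.mulVec W = W ⬝ᵥ b := by rw [hsym, hAu]
      have h3 : (c • r) ⬝ᵥ A.mulVec (c • r) = (c • r) ⬝ᵥ b := by rw [hAu]
      rw [sub_dotProduct, mulVec_sub, dotProduct_sub, dotProduct_sub, h1, h2, h3]
      ring
    have huu : (c • r) ⬝ᵥ A.mulVec (c • r) = (c • r) ⬝ᵥ b := by rw [hAu]
    have hug : (c • r) ⬝ᵥ G.mulVec r = (c • r) ⬝ᵥ b := rfl
    rw [huu, hug]
    rw [hexp] at hnn
    linarith
  · have huu : (c • r) ⬝ᵥ A.mulVec (c • r) = (c • r) ⬝ᵥ b := by rw [hAu]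
    have hug : (c • r) ⬝ᵥ G.mulVec r = (c • r) ⬝ᵥ b := rfl
    rw [huu, hug, hub]
    have : r ⬝ᵥ G.mulVec r = r ⬝ᵥ b := rfl
    rw [this]
    have hcval : 1 - c = β2 / (S + β2) := by
      rw [hc]; field_simp; ring
    linear_combination (r ⬝ᵥ b) * hcval
  · intro hpos
    have hne : r ⬝ᵥ G.mulVec r ≠ 0 := ne_of_gt hpos
    field_simp
    ring
end

section
/- For α > 0 define d(α) = 2·sqrt(2)/sqrt(α² + 8), g(α) = 2/sqrt(α² + 4), and β₁²(α) = (d(α) − g(α))/(g(α) − d(α)²). Then as α → 0⁺, β₁²(α) = 8/α² + 3/4 − α²/64 + O(α⁴); that is, the function α ↦ β₁²(α) − 8/α² − 3/4 + α²/64 is O(α⁴) as α → 0⁺. -/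
open Filter Topology Asymptotics


private lemma key (α u v r : ℝ) (hα : 0 < α) (hu2 : u^2 = α^2+4) (hv2 : v^2 = α^2+8)
    (hr2 : r^2 = 2) (hu : 0 < u) (hv : 0 < v) (hr : 0 < r) :
    (2*r/v - 2/u)/(2/u - (2*r/v)^2) - 8/α^2 - 3/4 + α^2/64
      = α^4 * (((u+2)^2*(v+2*r)^2 + 8*(u+2)*(v+2*r)^2 + 4*r*(v+2*r)*(u+2)^2
          + 32*(v+2*r)^2 + 16*(u+2)^2 + r*(α^2-48)*(u+2)*(v+2*r))
        / (64 * ((α^2+8) + 2*r*v + 4*u + r*u*v) * (u+2)^2 * (v+2*r)^2)) := by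
  have h1 : (α^2+8-4*u)*(α^2+8+4*u) = α^4 := by linear_combination (-16:ℝ)*hu2
  have h2 : α^2+8-4*u > 0 := by nlinarith [pow_pos hα 4]
  have hh : 2*v^2 - u*(2*r)^2 > 0 := by nlinarith
  have hden : (0:ℝ) < 2/u - (2*r/v)^2 := by
    have h3 : (2*r/v)^2 = 8/v^2 := by
      rw [div_pow, mul_pow, hr2]; ring_nf
    rw [h3, sub_pos, div_lt_div_iff₀ (by positivity) hu]
    nlinarith
  have hD2 : (0:ℝ) < (α^2+8) + 2*r*v + 4*u + r*u*v := by positivity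
  have hu2' : u + 2 ≠ 0 := by positivity
  have hv2' : v + 2*r ≠ 0 := by positivity
  have hhne : 2*v^2 - u*(2*r)^2 ≠ 0 := ne_of_gt hh
  have hhne2 : v^2 - 2*r^2*u ≠ 0 := by nlinarith
  field_simp
  linear_combination ((1048576:ℝ)*r^4 + (1048576:ℝ)*v*r^3 + (262144:ℝ)*v*r^5 + (65536:ℝ)*v^2*r^2 + (262144:ℝ)*v^2*r^4 + (-196608:ℝ)*v^3*r + (16384:ℝ)*v^3*r^3 + (-49152:ℝ)*v^4 + (-49152:ℝ)*v^4*r^2 + (-12288:ℝ)*v^5*r + (393216:ℝ)*u*r^4 + (393216:ℝ)*u*v*r^3 + (98304:ℝ)*u*v*r^5 + (65536:ℝ)*u*v^2*r^2 + (98304:ℝ)*u*v^2*r^4 + (-32768:ℝ)*u*v^3*r + (16384:ℝ)*u*v^3*r^3 + (-8192:ℝ)*u*v^4 + (-8192:ℝ)*u*v^4*r^2 + (-2048:ℝ)*u*v^5*r + (65536:ℝ)*u^2*r^4 + (65536:ℝ)*u^2*v*r^3 + (16384:ℝ)*u^2*v*r^5 + (16384:ℝ)*u^2*v^2*r^2 +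 (16384:ℝ)*u^2*v^2*r^4 + (4096:ℝ)*u^2*v^3*r^3 + (229376:ℝ)*α^2*r^4 + (294912:ℝ)*α^2*v*r^3 + (40960:ℝ)*α^2*v*r^5 + (71680:ℝ)*α^2*v^2*r^2 + (57344:ℝ)*α^2*v^2*r^4 + (-34816:ℝ)*α^2*v^3*r + (15872:ℝ)*α^2*v^3*r^3 + (-12800:ℝ)*α^2*v^4 + (-6656:ℝ)*α^2*v^4*r^2 + (-2688:ℝ)*α^2*v^5*r + (53248:ℝ)*α^2*u*r^4 + (77824:ℝ)*α^2*u*v*r^3 + (9216:ℝ)*α^2*u*v*r^5 + (30720:ℝ)*α^2*u*v^2*r^2 + (15360:ℝ)*α^2*u*v^2*r^4 + (-1024:ℝ)*α^2*u*v^3*r + (6656:ℝ)*α^2*u*v^3*r^3 + (-1792:ℝ)*α^2*u*v^4 + (-256:ℝ)*α^2*u*v^4*r^2 + (-448:ℝ)*α^2*u*v^5*r + (6144:ℝ)*α^2*u^2*r^4 + (10240:ℝ)*α^2*u^2*v*r^3 + (1536:ℝ)*α^2*u^2*v*r^5 + (5632:ℝ)*α^2*u^2*v^2*r^2 + (2560:ℝ)*α^2*u^2*v^2*r^4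 + (1024:ℝ)*α^2*u^2*v^3*r + (1408:ℝ)*α^2*u^2*v^3*r^3 + (256:ℝ)*α^2*u^2*v^4*r^2 + (10240:ℝ)*α^4*r^4 + (18432:ℝ)*α^4*v*r^3 + (1024:ℝ)*α^4*v*r^5 + (9344:ℝ)*α^4*v^2*r^2 + (2048:ℝ)*α^4*v^2*r^4 + (640:ℝ)*α^4*v^3*r + (1376:ℝ)*α^4*v^3*r^3 + (-352:ℝ)*α^4*v^4 + (352:ℝ)*α^4*v^4*r^2 + (24:ℝ)*α^4*v^5*r + (768:ℝ)*α^4*u*r^4 + (1792:ℝ)*α^4*u*v*r^3 + (-192:ℝ)*α^4*u*v*r^5 + (1280:ℝ)*α^4*u*v^2*r^2 + (-192:ℝ)*α^4*u*v^2*r^4 + (320:ℝ)*α^4*u*v^3*r + (-32:ℝ)*α^4*u*v^3*r^3 + (16:ℝ)*α^4*u*v^4 + (16:ℝ)*α^4*u*v^4*r^2 + (4:ℝ)*α^4*u*v^5*r + (-128:ℝ)*α^4*u^2*r^4 + (-128:ℝ)*α^4*u^2*v*r^3 + (-32:ℝ)*α^4*u^2*v*r^5 + (-32:ℝ)*α^4*u^2*v^2*r^2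 + (-32:ℝ)*α^4*u^2*v^2*r^4 + (-8:ℝ)*α^4*u^2*v^3*r^3 + (512:ℝ)*α^6*r^2 + (-384:ℝ)*α^6*r^4 + (-128:ℝ)*α^6*v*r^3 + (-32:ℝ)*α^6*v*r^5 + (-64:ℝ)*α^6*v^2 + (-32:ℝ)*α^6*v^2*r^4 + (-16:ℝ)*α^6*v^3*r + (-8:ℝ)*α^6*v^3*r^3 + (128:ℝ)*α^6*u*r^2 + (64:ℝ)*α^6*u*r^4 + (32:ℝ)*α^6*u*v*r^3 + (16:ℝ)*α^8*r^4 + (8:ℝ)*α^8*v*r^3) * hu2 + ((-2097152:ℝ) + (-2097152:ℝ)*r^2 + (1048576:ℝ)*r^4 + (-1572864:ℝ)*v*r + (-262144:ℝ)*v^2 + (-262144:ℝ)*v^2*r^2 + (-65536:ℝ)*v^3*r + (-1048576:ℝ)*u + (-1048576:ℝ)*u*r^2 + (524288:ℝ)*u*r^4 + (-786432:ℝ)*u*v*r + (-131072:ℝ)*u*v^2 + (-131072:ℝ)*u*v^2*r^2 + (-32768:ℝ)*u*v^3*r + (-1245184:ℝ)*α^2 + (-720896:ℝ)*α^2*r^2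 + (491520:ℝ)*α^2*r^4 + (-704512:ℝ)*α^2*v*r + (65536:ℝ)*α^2*v*r^3 + (-122880:ℝ)*α^2*v^2 + (-90112:ℝ)*α^2*v^2*r^2 + (-26624:ℝ)*α^2*v^3*r + (-491520:ℝ)*α^2*u + (-229376:ℝ)*α^2*u*r^2 + (180224:ℝ)*α^2*u*r^4 + (-253952:ℝ)*α^2*u*v*r + (32768:ℝ)*α^2*u*v*r^3 + (-45056:ℝ)*α^2*u*v^2 + (-28672:ℝ)*α^2*u*v^2*r^2 + (-9216:ℝ)*α^2*u*v^3*r + (-249856:ℝ)*α^4 + (-28672:ℝ)*α^4*r^2 + (65536:ℝ)*α^4*r^4 + (-86016:ℝ)*α^4*v*r + (21504:ℝ)*α^4*v*r^3 + (-15872:ℝ)*α^4*v^2 + (-5120:ℝ)*α^4*v^2*r^2 + (-2560:ℝ)*α^4*v^3*r + (-71680:ℝ)*α^4*u + (6144:ℝ)*α^4*u*r^2 + (14336:ℝ)*α^4*u*r^4 + (-17408:ℝ)*α^4*u*v*r + (6656:ℝ)*α^4*u*v*r^3 + (-3328:ℝ)*α^4*u*v^2 + (-384:ℝ)*α^4*u*v^3*r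 + (-20736:ℝ)*α^6 + (6912:ℝ)*α^6*r^2 + (1920:ℝ)*α^6*r^4 + (-2240:ℝ)*α^6*v*r + (1344:ℝ)*α^6*v*r^3 + (-544:ℝ)*α^6*v^2 + (352:ℝ)*α^6*v^2*r^2 + (24:ℝ)*α^6*v^3*r + (-3712:ℝ)*α^6*u + (1920:ℝ)*α^6*u*r^2 + (-192:ℝ)*α^6*u*r^4 + (-32:ℝ)*α^6*u*v*r + (-32:ℝ)*α^6*u*v*r^3 + (-16:ℝ)*α^6*u*v^2 + (16:ℝ)*α^6*u*v^2*r^2 + (4:ℝ)*α^6*u*v^3*r + (-608:ℝ)*α^8 + (336:ℝ)*α^8*r^2 + (-32:ℝ)*α^8*r^4 + (-8:ℝ)*α^8*v*r^3 + (-16:ℝ)*α^8*u + (8:ℝ)*α^8*u*r^2) * hv2 + ((8388608:ℝ) + (12582912:ℝ)*r^2 + (6291456:ℝ)*v*r + (1048576:ℝ)*v*r^3 + (4194304:ℝ)*u + (6291456:ℝ)*u*r^2 + (3145728:ℝ)*u*v*r + (524288:ℝ)*u*v*r^3 + (6029312:ℝ)*α^2 + (6946816:ℝ)*α^2*r^2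 + (3604480:ℝ)*α^2*v*r + (425984:ℝ)*α^2*v*r^3 + (2490368:ℝ)*α^2*u + (2686976:ℝ)*α^2*u*r^2 + (1409024:ℝ)*α^2*u*v*r + (147456:ℝ)*α^2*u*v*r^3 + (1622016:ℝ)*α^4 + (1286144:ℝ)*α^4*r^2 + (696320:ℝ)*α^4*v*r + (45056:ℝ)*α^4*v*r^3 + (532480:ℝ)*α^4*u + (356352:ℝ)*α^4*u*r^2 + (196608:ℝ)*α^4*u*v*r + (8192:ℝ)*α^4*u*v*r^3 + (207872:ℝ)*α^6 + (89600:ℝ)*α^6*r^2 + (51968:ℝ)*α^6*v*r + (896:ℝ)*α^6*v*r^3 + (50688:ℝ)*α^6*u + (14080:ℝ)*α^6*u*r^2 + (8832:ℝ)*α^6*u*v*r + (-192:ℝ)*α^6*u*v*r^3 + (12800:ℝ)*α^8 + (1344:ℝ)*α^8*r^2 + (1120:ℝ)*α^8*v*r + (-32:ℝ)*α^8*v*r^3 + (1920:ℝ)*α^8*u + (-96:ℝ)*α^8*u*r^2 + (16:ℝ)*α^8*u*v*r + (304:ℝ)*α^10 + (-16:ℝ)*α^10*r^2 + (8:ℝ)*α^10*u)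 * hr2

noncomputable def Gfun : ℝ → ℝ := fun α =>
  ((Real.sqrt (α^2+4)+2)^2*(Real.sqrt (α^2+8)+2*Real.sqrt 2)^2
    + 8*(Real.sqrt (α^2+4)+2)*(Real.sqrt (α^2+8)+2*Real.sqrt 2)^2
    + 4*Real.sqrt 2*(Real.sqrt (α^2+8)+2*Real.sqrt 2)*(Real.sqrt (α^2+4)+2)^2
    + 32*(Real.sqrt (α^2+8)+2*Real.sqrt 2)^2 + 16*(Real.sqrt (α^2+4)+2)^2
    + Real.sqrt 2*(α^2-48)*(Real.sqrt (α^2+4)+2)*(Real.sqrt (α^2+8)+2*Real.sqrt 2))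
  / (64 * ((α^2+8) + 2*Real.sqrt 2*Real.sqrt (α^2+8) + 4*Real.sqrt (α^2+4)
      + Real.sqrt 2*Real.sqrt (α^2+4)*Real.sqrt (α^2+8))
     * (Real.sqrt (α^2+4)+2)^2 * (Real.sqrt (α^2+8)+2*Real.sqrt 2)^2)

private lemma Gcont : ContinuousAt Gfun 0 := by
  unfold Gfun
  apply ContinuousAt.div
  · fun_prop
  · fun_prop
  · positivity

/-- Small-`α` expansion of the nonzero REC eigenvalue of the binary SPADE
measurement on two point sources (with `ξ = σ`, `α = γ/σ`):
`β₁²(α) = (d−g)/(g−d²) = 8/α² + 3/4 − α²/64 + O(α⁴)` as `α → 0⁺`, where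
`d(α) = 2√2/√(α²+8)` and `g(α) = 2/√(α²+4)`. -/
theorem stmt_14 :
    (fun α : ℝ =>
        (2 * Real.sqrt 2 / Real.sqrt (α^2 + 8) - 2 / Real.sqrt (α^2 + 4)) /
            (2 / Real.sqrt (α^2 + 4) - (2 * Real.sqrt 2 / Real.sqrt (α^2 + 8))^2)
          - 8 / α^2 - 3/4 + α^2/64)
      =O[𝓝[>] (0:ℝ)] fun α => α^4 := by
  have hG : Gfun =O[𝓝[>] (0:ℝ)] (fun _ => (1:ℝ)) :=
    (Gcont.continuousWithinAt.tendsto).isBigO_one ℝ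
  have h4 : (fun α : ℝ => α^4 * Gfun α) =O[𝓝[>] (0:ℝ)] fun α => α^4 := by
    simpa using (isBigO_refl (fun α : ℝ => α^4) (𝓝[>] (0:ℝ))).mul hG
  refine h4.congr' ?_ EventuallyEq.rfl
  filter_upwards [self_mem_nhdsWithin] with α (hα : 0 < α)
  have h4pos : (0:ℝ) < α^2+4 := by positivity
  have h8pos : (0:ℝ) < α^2+8 := by positivity
  exact (key α (Real.sqrt (α^2+4)) (Real.sqrt (α^2+8)) (Real.sqrt 2) hα
    (Real.sq_sqrt h4pos.le) (Real.sq_sqrt h8pos.le) (Real.sq_sqrt (by norm_num))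
    (Real.sqrt_pos.mpr h4pos) (Real.sqrt_pos.mpr h8pos)
    (Real.sqrt_pos.mpr (by norm_num))).symm
end

section
/- Let σ, ξ > 0 with ξ ≠ σ, set s = ξ² + σ², and for γ > 0 define d(γ) = 4ξσ/sqrt(s·(γ² + 4s)), g(γ) = 4·sqrt(2)·ξ²σ²/(s^(3/2)·sqrt(γ² + 2s)), and β₁²(γ) = (d(γ) − g(γ))/(g(γ) − d(γ)²). Then lim_{γ → 0⁺} γ⁴·β₁²(γ) = 16·(ξ − σ)²·(ξ² + σ²)²/(ξσ). In other words, when the detection-mode width ξ differs from the PSF width σ, the nonzero REC eigenvalue diverges at fourth order, β₁²(γ) ~ 16(ξ−σ)²(ξ²+σ²)²/(ξσγ⁴) as γ → 0. -/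
open Filter Topology

/-- Fourth-order divergence of the nonzero REC eigenvalue of binary SPADE when
the detection-mode width `ξ` differs from the PSF width `σ`: with
`d(γ) = 4ξσ/√((ξ²+σ²)(γ²+4(ξ²+σ²)))`,
`g(γ) = 4√2·ξ²σ²/((ξ²+σ²)^(3/2)·√(γ²+2(ξ²+σ²)))` and
`β₁²(γ) = (d−g)/(g−d²)`, one has
`γ⁴·β₁²(γ) → 16(ξ−σ)²(ξ²+σ²)²/(ξσ)` as `γ → 0⁺`. -/
theorem stmt_15 (σ ξ : ℝ) (hσ : 0 < σ) (hξ : 0 < ξ) (hne : ξ ≠ σ) :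
    Tendsto (fun γ : ℝ =>
        γ^4 *
          ((4 * ξ * σ / Real.sqrt ((ξ^2 + σ^2) * (γ^2 + 4 * (ξ^2 + σ^2)))
              - 4 * Real.sqrt 2 * ξ^2 * σ^2
                  / ((ξ^2 + σ^2) ^ ((3:ℝ)/2) * Real.sqrt (γ^2 + 2 * (ξ^2 + σ^2)))) /
            (4 * Real.sqrt 2 * ξ^2 * σ^2
                  / ((ξ^2 + σ^2) ^ ((3:ℝ)/2) * Real.sqrt (γ^2 + 2 * (ξ^2 + σ^2)))
              - (4 * ξ * σ / Real.sqrt ((ξ^2 + σ^2) * (γ^2 + 4 * (ξ^2 + σ^2))))^2)))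
      (𝓝[>] (0:ℝ))
      (𝓝 (16 * (ξ - σ)^2 * (ξ^2 + σ^2)^2 / (ξ * σ))) := by
  have hs0 : (0:ℝ) < ξ^2 + σ^2 := by positivity
  set s : ℝ := ξ^2 + σ^2 with hs_def
  have hs : (0:ℝ) < s := hs0
  have hrpow : s ^ ((3:ℝ)/2) = Real.sqrt s ^ 3 := by
    rw [Real.sqrt_eq_rpow, ← Real.rpow_natCast (s ^ ((1:ℝ)/2)) 3, ← Real.rpow_mul hs.le]
    norm_num
  set R : ℝ := Real.sqrt 2 with hR_def
  set S : ℝ := Real.sqrt s with hS_def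
  have hS : 0 < S := Real.sqrt_pos.mpr hs
  have hS2 : S ^ 2 = s := Real.sq_sqrt hs.le
  have hR : (0:ℝ) < R := Real.sqrt_pos.mpr (by norm_num)
  have hR2 : R ^ 2 = 2 := Real.sq_sqrt (by norm_num)
  have hS3 : S ^ 3 = S * s := by rw [← hS2]; ring
  clear_value s R S
  -- the regularized function
  set F : ℝ → ℝ := fun γ =>
    (4 * ξ * σ / Real.sqrt (s * (γ^2 + 4 * s))
        - 4 * R * ξ^2 * σ^2 / (S^3 * Real.sqrt (γ^2 + 2 * s)))
      * (S^3 * Real.sqrt (γ^2 + 2 * s) * (γ^2 + 4 * s)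
          * (R * (γ^2 + 4 * s) + 4 * S * Real.sqrt (γ^2 + 2 * s)))
      / (8 * ξ^2 * σ^2) with hF_def
  have hFlim : Tendsto F (𝓝[>] (0:ℝ)) (𝓝 (16 * (ξ - σ)^2 * s^2 / (ξ * σ))) := by
    have h2s : Real.sqrt ((0:ℝ)^2 + 2 * s) = R * S := by
      rw [hR_def, hS_def, ← Real.sqrt_mul (by norm_num : (0:ℝ) ≤ 2)]
      norm_num
    have h4s : Real.sqrt (s * ((0:ℝ)^2 + 4 * s)) = 2 * s := by
      rw [show s * ((0:ℝ)^2 + 4 * s) = (2*s)^2 by ring, Real.sqrt_sq (by linarith)]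
    have hB0 : Tendsto (fun γ : ℝ => Real.sqrt (γ^2 + 2 * s)) (𝓝[>] (0:ℝ)) (𝓝 (R * S)) := by
      have hc : Continuous fun γ : ℝ => Real.sqrt (γ^2 + 2 * s) :=
        Real.continuous_sqrt.comp ((continuous_pow 2).add continuous_const)
      have := (hc.tendsto 0).mono_left (nhdsWithin_le_nhds (s := Set.Ioi (0:ℝ)))
      rwa [h2s] at this
    have hA0 : Tendsto (fun γ : ℝ => Real.sqrt (s * (γ^2 + 4 * s))) (𝓝[>] (0:ℝ)) (𝓝 (2 * s)) := by
      have hc : Continuous fun γ : ℝ => Real.sqrt (s * (γ^2 + 4 * s)) :=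
        Real.continuous_sqrt.comp (continuous_const.mul ((continuous_pow 2).add continuous_const))
      have := (hc.tendsto 0).mono_left (nhdsWithin_le_nhds (s := Set.Ioi (0:ℝ)))
      rwa [h4s] at this
    have hP : Tendsto (fun γ : ℝ => γ^2 + 4 * s) (𝓝[>] (0:ℝ)) (𝓝 (4 * s)) := by
      have hc : Continuous fun γ : ℝ => γ^2 + 4 * s := (continuous_pow 2).add continuous_const
      have := (hc.tendsto 0).mono_left (nhdsWithin_le_nhds (s := Set.Ioi (0:ℝ)))
      rwa [show (0:ℝ)^2 + 4 * s = 4 * s by norm_num] at this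
    have h1 : Tendsto (fun γ : ℝ => 4 * ξ * σ / Real.sqrt (s * (γ^2 + 4 * s)))
        (𝓝[>] (0:ℝ)) (𝓝 (4 * ξ * σ / (2 * s))) :=
      tendsto_const_nhds.div hA0 (by linarith : (0:ℝ) < 2 * s).ne'
    have h2 : Tendsto (fun γ : ℝ => 4 * R * ξ^2 * σ^2 / (S^3 * Real.sqrt (γ^2 + 2 * s)))
        (𝓝[>] (0:ℝ)) (𝓝 (4 * R * ξ^2 * σ^2 / (S^3 * (R * S)))) :=
      tendsto_const_nhds.div (tendsto_const_nhds.mul hB0)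
        (mul_pos (pow_pos hS 3) (mul_pos hR hS)).ne'
    have h3 : Tendsto (fun γ : ℝ => S^3 * Real.sqrt (γ^2 + 2 * s) * (γ^2 + 4 * s)
          * (R * (γ^2 + 4 * s) + 4 * S * Real.sqrt (γ^2 + 2 * s)))
        (𝓝[>] (0:ℝ)) (𝓝 (S^3 * (R * S) * (4 * s) * (R * (4 * s) + 4 * S * (R * S)))) :=
      ((tendsto_const_nhds.mul hB0).mul hP).mul
        ((tendsto_const_nhds.mul hP).add (tendsto_const_nhds.mul hB0))
    have hfinal := ((h1.sub h2).mul h3).div_const (8 * ξ^2 * σ^2)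
    have hval : (4 * ξ * σ / (2 * s) - 4 * R * ξ^2 * σ^2 / (S^3 * (R * S)))
        * (S^3 * (R * S) * (4 * s) * (R * (4 * s) + 4 * S * (R * S))) / (8 * ξ^2 * σ^2)
        = 16 * (ξ - σ)^2 * s^2 / (ξ * σ) := by
      have e1 : S^3 * (R * S) = R * s^2 := by rw [← hS2]; ring
      have e2 : R * (4 * s) + 4 * S * (R * S) = 8 * R * s := by rw [← hS2]; ring
      rw [e1, e2]
      have e3 : R * s^2 * (4 * s) * (8 * R * s) = 64 * s^4 := by
        linear_combination 32 * s^4 * hR2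
      rw [e3, hs_def]
      field_simp
      ring
    rw [hval] at hfinal
    exact hfinal
  refine Tendsto.congr' ?_ hFlim
  filter_upwards [self_mem_nhdsWithin] with γ hγ
  have hγ0 : (0:ℝ) < γ := hγ
  have hγsq : (0:ℝ) ≤ γ^2 := sq_nonneg γ
  have hu : (0:ℝ) < γ^2 + 2 * s := by linarith
  have ht : (0:ℝ) < γ^2 + 4 * s := by linarith
  simp only [hF_def, hrpow]
  set B : ℝ := Real.sqrt (γ^2 + 2 * s) with hB_def
  set A : ℝ := Real.sqrt (s * (γ^2 + 4 * s)) with hA_def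
  have hBpos : 0 < B := Real.sqrt_pos.mpr hu
  have hApos : 0 < A := Real.sqrt_pos.mpr (mul_pos hs ht)
  have hB2 : B^2 = γ^2 + 2 * s := Real.sq_sqrt hu.le
  have hA2 : A^2 = s * (γ^2 + 4 * s) := Real.sq_sqrt (mul_pos hs ht).le
  have hsum : (0:ℝ) < R * (γ^2 + 4 * s) + 4 * S * B :=
    add_pos (mul_pos hR ht) (mul_pos (mul_pos (by norm_num) hS) hBpos)
  have hstuff : (0:ℝ) < S^3 * B * (γ^2 + 4 * s) * (R * (γ^2 + 4 * s) + 4 * S * B) :=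
    mul_pos (mul_pos (mul_pos (pow_pos hS 3) hBpos) ht) hsum
  have hkey : (R * (γ^2 + 4 * s) - 4 * S * B) * (R * (γ^2 + 4 * s) + 4 * S * B) = 2 * γ^4 := by
    linear_combination (γ^2 + 4*s)^2 * hR2 - 16 * B^2 * hS2 - 16 * s * hB2
  have step1 : 4 * R * ξ^2 * σ^2 / (S^3 * B) - (4 * ξ * σ)^2 / (s * (γ^2 + 4 * s))
      = 4 * ξ^2 * σ^2 * (R * (γ^2 + 4 * s) - 4 * S * B) / (S^3 * B * (γ^2 + 4 * s)) := by
    rw [hS3]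
    field_simp
  have step2 : 4 * ξ^2 * σ^2 * (R * (γ^2 + 4 * s) - 4 * S * B) / (S^3 * B * (γ^2 + 4 * s))
      = 8 * ξ^2 * σ^2 * γ^4 / (S^3 * B * (γ^2 + 4 * s) * (R * (γ^2 + 4 * s) + 4 * S * B)) := by
    rw [div_eq_div_iff (mul_pos (mul_pos (pow_pos hS 3) hBpos) ht).ne' hstuff.ne']
    linear_combination (4 * ξ^2 * σ^2 * (S^3 * B * (γ^2 + 4*s))) * hkey
  have hden : 4 * R * ξ^2 * σ^2 / (S^3 * B) - (4 * ξ * σ / A)^2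
      = 8 * ξ^2 * σ^2 * γ^4 / (S^3 * B * (γ^2 + 4 * s) * (R * (γ^2 + 4 * s) + 4 * S * B)) := by
    rw [div_pow, hA2]
    exact step1.trans step2
  rw [hden]
  field_simp
end
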